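/- For n ≥ 2 and m ≥ 2n, R(K_{1,n}, W_m) = n + m − 1 if both n and m are even, and n + m otherwise. -/

import Mathlib

open SimpleGraph

/-- `G` contains a copy of `H` (as a subgraph). -/
def HasCopy {α β : Type*} (G : SimpleGraph α) (H : SimpleGraph β) : Prop :=
  ∃ f : H →g G, Function.Injective f

/-- The wheel `W m`: a cycle `C m` together with a hub (`none`) adjacent to all cycle vertices. -/
def wheelGraph (m : ℕ) : SimpleGraph (Option (Fin m)) where
  Adj x y :=
    match x, y with
    | some a, some b => (cycleGraph m).Adj a b
    | some _, none => True
    | none, some _ => True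
    | none, none => False
  symm := by
    refine ⟨?_⟩
    intro x y h
    match x, y with
    | some a, some b => exact (cycleGraph m).adj_symm h
    | some _, none => trivial
    | none, some _ => trivial
  loopless := by
    refine ⟨?_⟩
    intro x h
    match x with
    | some a => exact (cycleGraph m).irrefl h
    | none => exact h

/-- The star `K_{1,n}`. -/
def starGraph (n : ℕ) : SimpleGraph (Unit ⊕ Fin n) := completeBipartiteGraph Unit (Fin n)

/-- `r` is a Ramsey number for the pair `(G₁, G₂)`. -/
def IsRamsey {α β : Type*} (G₁ : SimpleGraph α) (G₂ : SimpleGraph β) (r : ℕ) : Prop :=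
  ∀ G : SimpleGraph (Fin r), HasCopy G G₁ ∨ HasCopy Gᶜ G₂

/-- The Ramsey number `R(G₁, G₂)`. -/
noncomputable def ramseyNumber {α β : Type*} (G₁ : SimpleGraph α) (G₂ : SimpleGraph β) : ℕ :=
  sInf {r | IsRamsey G₁ G₂ r}

/-!
If a graph on `n + m` vertices contains no `K_{1,n}`, all its degrees are below `n`, so in the
complement any vertex `v` has at least `m` neighbours, and every vertex keeps complement-degree
at least `m - n ≥ m / 2` inside a set of `m` of them. Dirac's theorem gives a Hamiltonian cycle
of that set, which together with `v` is a wheel `W_m`. On `n + m - 1` vertices with `n` and `m`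
even the same works, because by the handshake lemma some vertex has degree at most `n - 2`.

Conversely, an `r`-regular circulant graph on `N` vertices, with `r = n - 1` and `N = n + m - 1`
(or `r = n - 2` and `N = n + m - 2` when `n` and `m` are even), has no vertex of degree `n` and
its complement has no vertex of degree `m`.

Dirac's theorem is proved by Pósa rotation: a longest path has all neighbours of its endpoints
on it, two of them cross, so its vertices carry a cycle, and a vertex off that cycle would
extend it to a longer path.
-/

open Finset Function

lemma Fin.card_filter_val_eq {N : ℕ} (Q : ℕ → Prop) [DecidablePred Q] :
    #{d : Fin N | Q d.val} = #{x ∈ Iio N | Q x} := by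
  rw [← Fin.map_valEmbedding_univ, filter_map, card_map]
  rfl

namespace SimpleGraph

variable {α : Type*} {G : SimpleGraph α}

lemma degree_lt_card_of_neighborFinset_subset {x : α} [Fintype (G.neighborSet x)] {s : Finset α}
    (hx : x ∈ s) (h : G.neighborFinset x ⊆ s) : G.degree x < #s := by
  rw [← card_neighborFinset_eq_degree]
  exact card_lt_card ((ssubset_iff_of_subset h).2 ⟨x, hx, by simp⟩)

lemma card_filter_adj_eq_degree {β : Type*} [Fintype β] {x : α} [Fintype (G.neighborSet x)]
    [DecidablePred (G.Adj x)] {p : β → α} (hp : Injective p)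
    (h : ∀ w, G.Adj x w → w ∈ Set.range p) : #{b | G.Adj x (p b)} = G.degree x := by
  rw [← card_neighborFinset_eq_degree, ← card_map ⟨p, hp⟩]
  congr 1
  ext w
  simp only [mem_map, mem_filter, mem_univ, true_and, Embedding.coeFn_mk, mem_neighborFinset]
  refine ⟨by rintro ⟨b, hb, rfl⟩; exact hb, fun hw => ?_⟩
  obtain ⟨b, rfl⟩ := h w hw
  exact ⟨b, hw, rfl⟩

lemma degree_le_degree_induce_add [Fintype α] [DecidableEq α] [DecidableRel G.Adj] (s : Finset α)
    (u : (s : Set α)) : G.degree u ≤ (G.induce (s : Set α)).degree u + #sᶜ := by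
  rw [← card_neighborFinset_eq_degree, ← card_neighborFinset_eq_degree]
  calc #(G.neighborFinset u)
      ≤ #(((G.induce (s : Set α)).neighborFinset u).map (Embedding.subtype _) ∪ sᶜ) := by
        refine card_le_card fun w hw => ?_
        by_cases hws : w ∈ s
        · exact mem_union_left _ (mem_map.2 ⟨⟨w, hws⟩, by simpa using hw, rfl⟩)
        · exact mem_union_right _ (mem_compl.2 hws)
    _ ≤ _ := (card_union_le _ _).trans (by rw [card_map])

lemma exists_degree_ne_of_odd_card [Fintype α] (G : SimpleGraph α) [DecidableRel G.Adj]
    (hcard : Odd (Fintype.card α)) {d : ℕ} (hd : Odd d) : ∃ v, G.degree v ≠ d := by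
  by_contra! h
  have := G.even_card_odd_degree_vertices
  simp only [h, hd, filter_true, card_univ] at this
  exact Nat.not_even_iff_odd.2 hcard this

lemma degree_circulantGraph {Γ : Type*} [AddGroup Γ] [Fintype Γ] [DecidableEq Γ] {s : Finset Γ}
    (hs₀ : 0 ∉ s) (hs : ∀ d ∈ s, -d ∈ s) (v : Γ) :
    (circulantGraph (s : Set Γ)).degree v = #s := by
  rw [← card_neighborFinset_eq_degree, ← card_image_of_injective s (add_left_injective v)]
  congr 1
  ext w
  have hsymm : v - w ∈ s ↔ w - v ∈ s :=
    ⟨fun h => by simpa using hs _ h, fun h => by simpa using hs _ h⟩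
  simp only [mem_neighborFinset, circulantGraph_adj, mem_coe, hsymm, or_self, mem_image,
    ← eq_sub_iff_add_eq, exists_eq_right]
  exact ⟨And.right, fun h => ⟨fun hvw => hs₀ (by simpa [hvw] using h), h⟩⟩

/-- The witness is the circulant graph with jumps `±1, …, ±⌊r/2⌋`, together with the
antipodal jump `N/2` when `r` is odd. -/
theorem exists_regular_fin {N r : ℕ} (hrN : r < N) (heven : Even (r * N)) :
    ∃ (G : SimpleGraph (Fin N)) (_ : DecidableRel G.Adj), ∀ v, G.degree v = r := by
  have : NeZero N := ⟨by omega⟩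
  obtain ⟨a, ha⟩ := Nat.even_or_odd' r
  let Q (x : ℕ) : Prop := 0 < x ∧ (x ≤ a ∨ N - a ≤ x ∨ (r = 2 * a + 1 ∧ 2 * x = N))
  let s : Finset (Fin N) := {d | Q d.val}
  refine ⟨circulantGraph (s : Set (Fin N)), inferInstance, fun v => ?_⟩
  rw [degree_circulantGraph (by simp [s, Q]) (fun d hd => ?_)]
  · refine (Fin.card_filter_val_eq Q).trans ?_
    have hband : #(Icc 1 a ∪ Icc (N - a) (N - 1)) = 2 * a := by
      rw [card_union_of_disjoint (Finset.disjoint_left.2 fun x hx hx' => by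
          simp only [mem_Icc] at hx hx'
          omega),
        Nat.card_Icc, Nat.card_Icc]
      omega
    rcases ha with ha | ha
    · have hQ : {x ∈ Iio N | Q x} = Icc 1 a ∪ Icc (N - a) (N - 1) := by
        ext x
        simp only [mem_filter, mem_Iio, mem_union, mem_Icc, Q]
        omega
      rw [hQ, hband, ha]
    · obtain ⟨b, hb⟩ : Even N := (Nat.even_mul.1 heven).resolve_left (by simp [ha])
      have hQ : {x ∈ Iio N | Q x} = insert (N / 2) (Icc 1 a ∪ Icc (N - a) (N - 1)) := by
        ext x
        simp only [mem_filter, mem_Iio, mem_insert, mem_union, mem_Icc, Q]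
        omega
      rw [hQ, card_insert_of_notMem (by simp only [mem_union, mem_Icc]; omega), hband, ha]
  · have hd0 : d ≠ 0 := by rintro rfl; simp [s, Q] at hd
    simp only [s, Q, mem_filter, mem_univ, true_and] at hd ⊢
    rw [Fin.val_neg, if_neg hd0]
    omega

def IsPathTuple (G : SimpleGraph α) {k : ℕ} (p : Fin (k + 1) → α) : Prop :=
  Injective p ∧ ∀ i : Fin k, G.Adj (p i.castSucc) (p i.succ)

/-- For `k = 1` this is a single edge, matching `cycleGraph 2`. -/
def IsCycleTuple (G : SimpleGraph α) {k : ℕ} (c : Fin (k + 1) → α) : Prop :=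
  Injective c ∧ ∀ i, G.Adj (c i) (c (i + 1))

namespace IsPathTuple

variable {k : ℕ} {p : Fin (k + 1) → α}

lemma adj_of_val_add_one (hp : G.IsPathTuple p) {a b : Fin (k + 1)} (hab : a.val + 1 = b.val) :
    G.Adj (p a) (p b) := by
  have hk : a.val < k := by omega
  simpa [Fin.ext_iff, hab] using hp.2 ⟨a.val, hk⟩

lemma rev (hp : G.IsPathTuple p) : G.IsPathTuple (p ∘ Fin.rev) :=
  ⟨hp.1.comp Fin.rev_injective, fun i => by
    simpa [Fin.rev_castSucc, Fin.rev_succ] using (hp.2 i.rev).symm⟩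

lemma snoc (hp : G.IsPathTuple p) {w : α} (hw : w ∉ Set.range p)
    (hlast : G.Adj (p (Fin.last k)) w) : G.IsPathTuple (Fin.snoc p w : Fin (k + 2) → α) := by
  refine ⟨Fin.snoc_injective_iff.2 ⟨hp.1, hw⟩, fun i => ?_⟩
  induction i using Fin.lastCases with
  | last => simpa using hlast
  | cast j =>
    rw [Fin.succ_castSucc, Fin.snoc_castSucc, Fin.snoc_castSucc]
    exact hp.2 j

lemma adj_last_mem_range (hp : G.IsPathTuple p)
    (hmax : ∀ q : Fin (k + 2) → α, ¬ G.IsPathTuple q) {w : α}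
    (hw : G.Adj (p (Fin.last k)) w) :
    w ∈ Set.range p := by
  by_contra hw'
  exact hmax _ (hp.snoc hw' hw)

lemma adj_zero_mem_range (hp : G.IsPathTuple p)
    (hmax : ∀ q : Fin (k + 2) → α, ¬ G.IsPathTuple q) {w : α} (hw : G.Adj (p 0) w) :
    w ∈ Set.range p := by
  rw [← Fin.rev_surjective.range_comp p]
  exact hp.rev.adj_last_mem_range hmax (by simpa using hw)

lemma card_filter_adj_succ_eq_degree [Fintype α] [DecidableRel G.Adj] (hp : G.IsPathTuple p)
    (hmax : ∀ q : Fin (k + 2) → α, ¬ G.IsPathTuple q) :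
    #{i : Fin k | G.Adj (p 0) (p i.succ)} = G.degree (p 0) := by
  rw [← card_filter_adj_eq_degree hp.1 fun w => hp.adj_zero_mem_range hmax,
    Fin.card_filter_univ_succ, if_neg G.irrefl]

/-- All neighbours of the endpoints of a maximal path lie on it, and there are more of them than
path edges, so some path edge has its two ends joined to the two endpoints crosswise. -/
lemma exists_crossing_chords [Fintype α] [DecidableRel G.Adj] (hp : G.IsPathTuple p)
    (hmax : ∀ q : Fin (k + 2) → α, ¬ G.IsPathTuple q)
    (hdeg : ∀ v, Fintype.card α ≤ 2 * G.degree v) :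
    ∃ i : Fin k, G.Adj (p 0) (p i.succ) ∧ G.Adj (p (Fin.last k)) (p i.castSucc) := by
  have hfirst := hp.card_filter_adj_succ_eq_degree hmax
  have hlast :
      #{i : Fin k | G.Adj (p (Fin.last k)) (p i.castSucc)} = G.degree (p (Fin.last k)) := by
    have h := hp.rev.card_filter_adj_succ_eq_degree hmax
    simp only [comp_apply, Fin.rev_zero, Fin.rev_succ] at h
    refine Eq.trans ?_ (h.trans (by congr 1))
    refine card_nbij' Fin.rev Fin.rev ?_ ?_ (fun i _ => Fin.rev_rev i)
      (fun i _ => Fin.rev_rev i) <;>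
      intro i <;> simp
  have hk : k + 1 ≤ Fintype.card α := by simpa using Fintype.card_le_of_injective p hp.1
  obtain ⟨i, hi⟩ := inter_nonempty_of_card_lt_card_add_card
    (subset_univ {i : Fin k | G.Adj (p 0) (p i.succ)})
    (subset_univ {i : Fin k | G.Adj (p (Fin.last k)) (p i.castSucc)}) (by
      have := hdeg (p 0)
      have := hdeg (p (Fin.last k))
      rw [hfirst, hlast, card_univ, Fintype.card_fin]
      omega)
  simp only [mem_inter, mem_filter, mem_univ, true_and] at hi
  exact ⟨i, hi⟩

/-- Pósa rotation: `p 0, …, p i, p k, p (k - 1), …, p (i + 1)` closes up into a cycle. -/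
lemma exists_isCycleTuple (hp : G.IsPathTuple p) (i : Fin k) (hfirst : G.Adj (p 0) (p i.succ))
    (hlast : G.Adj (p (Fin.last k)) (p i.castSucc)) :
    ∃ c : Fin (k + 1) → α, G.IsCycleTuple c := by
  let σ : Fin (k + 1) → Fin (k + 1) := fun t =>
    if h : t.val ≤ i.val then t else ⟨k + i.val + 1 - t.val, by omega⟩
  have hσ_val (t : Fin (k + 1)) :
      (σ t).val = if t.val ≤ i.val then t.val else k + i.val + 1 - t.val := by
    simp only [σ]
    split_ifs <;> rfl
  have hσ : Injective σ := fun a b hab => by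
    rw [Fin.ext_iff, hσ_val, hσ_val] at hab
    ext
    split_ifs at hab <;> omega
  refine ⟨p ∘ σ, hp.1.comp hσ, fun t => ?_⟩
  show G.Adj (p (σ t)) (p (σ (t + 1)))
  rcases eq_or_ne t (Fin.last k) with rfl | htk
  · rw [Fin.last_add_one]
    convert hfirst.symm using 3 <;> ext <;>
      simp only [hσ_val, Fin.val_last, Fin.val_zero, Fin.val_succ, Nat.zero_le, ↓reduceIte]
    split_ifs <;> omega
  have ht : (t + 1).val = t.val + 1 := by simp [Fin.val_add_one, htk]
  rcases lt_trichotomy t.val i.val with hti | hti | hti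
  · refine hp.adj_of_val_add_one ?_
    simp only [hσ_val, ht]
    split_ifs <;> omega
  · convert hlast.symm using 3 <;> ext <;>
      simp only [hσ_val, ht, Fin.val_last, Fin.val_castSucc] <;> split_ifs <;> omega
  · refine (hp.adj_of_val_add_one ?_).symm
    simp only [hσ_val, ht]
    split_ifs <;> omega

end IsPathTuple

namespace IsCycleTuple

variable {k : ℕ} {c : Fin (k + 1) → α}

lemma map {γ : Type*} {G' : SimpleGraph γ} (hc : G.IsCycleTuple c) (f : G ↪g G') :
    G'.IsCycleTuple (f ∘ c) :=
  ⟨f.injective.comp hc.1, fun i => f.map_adj_iff.2 (hc.2 i)⟩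

lemma isPathTuple_add (hc : G.IsCycleTuple c) (j : Fin (k + 1)) :
    G.IsPathTuple (fun i => c (j + i)) :=
  ⟨hc.1.comp (add_right_injective j), fun i => by
    simpa [add_assoc, Fin.coeSucc_eq_succ] using hc.2 (j + i.castSucc)⟩

lemma isPathTuple_snoc (hc : G.IsCycleTuple c) {j : Fin (k + 1)} {w : α}
    (hw : w ∉ Set.range c) (hj : G.Adj (c j) w) :
    G.IsPathTuple (Fin.snoc (fun i => c (j + 1 + i)) w : Fin (k + 2) → α) := by
  refine (hc.isPathTuple_add (j + 1)).snoc ?_ ?_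
  · rintro ⟨x, hx⟩
    exact hw ⟨_, hx⟩
  · rwa [add_assoc, add_comm 1, Fin.last_add_one, add_zero]

end IsCycleTuple

lemma exists_maximal_isPathTuple [Fintype α] [Nonempty α] (G : SimpleGraph α) :
    ∃ k, ∃ p : Fin (k + 1) → α,
      G.IsPathTuple p ∧ ∀ q : Fin (k + 2) → α, ¬ G.IsPathTuple q := by
  classical
  let P k := ∃ p : Fin (k + 1) → α, G.IsPathTuple p
  have hP0 : P 0 :=
    ⟨fun _ => Classical.arbitrary α, fun a b _ => Fin.ext (by omega), Fin.elim0⟩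
  obtain ⟨p, hp⟩ := Nat.findGreatest_spec (Nat.zero_le (Fintype.card α)) hP0
  refine ⟨_, p, hp, fun q hq => ?_⟩
  have hcard := Fintype.card_le_of_injective q hq.1
  rw [Fintype.card_fin] at hcard
  exact Nat.findGreatest_is_greatest (P := P) (Nat.lt_succ_self _) (by omega) ⟨q, hq⟩

/-- Dirac's theorem. -/
theorem exists_isCycleTuple_of_card_le_two_mul_degree [Fintype α] [DecidableRel G.Adj] {N : ℕ}
    (hcard : Fintype.card α = N + 1) (hdeg : ∀ v, Fintype.card α ≤ 2 * G.degree v) :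
    ∃ c : Fin (N + 1) → α, G.IsCycleTuple c := by
  classical
  have : Nonempty α := Fintype.card_pos_iff.1 (by omega)
  obtain ⟨k, p, hp, hmax⟩ := G.exists_maximal_isPathTuple
  obtain ⟨i, hfirst, hlast⟩ := hp.exists_crossing_chords hmax hdeg
  obtain ⟨c, hc⟩ := hp.exists_isCycleTuple i hfirst hlast
  have hkN : k ≤ N := by simpa [hcard] using Fintype.card_le_of_injective c hc.1
  obtain rfl : k = N := by
    by_contra hne
    have hhead : G.degree (p 0) < #(univ.map ⟨p, hp.1⟩) :=
      degree_lt_card_of_neighborFinset_subset (by simp) fun w hw => by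
        obtain ⟨j, rfl⟩ := hp.adj_zero_mem_range hmax ((mem_neighborFinset _ _ _).1 hw)
        simp
    obtain ⟨w, hw⟩ : ∃ w, w ∉ Set.range c := by
      by_contra! h
      have := Fintype.card_le_of_surjective c h
      simp only [Fintype.card_fin] at this
      omega
    -- `w` has more neighbours than there are vertices off the cycle.
    obtain ⟨j, hj⟩ : ∃ j, G.Adj (c j) w := by
      by_contra! h
      have hw' : G.degree w < #(univ.map ⟨c, hc.1⟩)ᶜ :=
        degree_lt_card_of_neighborFinset_subset (by simpa using hw) fun x hx => by
          simp only [mem_neighborFinset] at hx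
          simp only [mem_compl, mem_map, mem_univ, true_and, Embedding.coeFn_mk, not_exists]
          exact fun j hj => h j (hj ▸ hx.symm)
      simp only [card_compl, card_map, card_univ, Fintype.card_fin] at hhead hw'
      have := hdeg w
      have := hdeg (p 0)
      omega
    exact hmax _ (hc.isPathTuple_snoc hw hj)
  exact ⟨c, hc⟩

end SimpleGraph

lemma HasCopy.of_injective_hom {α β γ : Type*} {G : SimpleGraph α} {G' : SimpleGraph γ}
    {H : SimpleGraph β} (f : G →g G') (hf : Injective f) (h : HasCopy G H) : HasCopy G' H :=
  let ⟨g, hg⟩ := h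
  ⟨f.comp g, hf.comp hg⟩

lemma HasCopy.exists_card_sub_one_le_degree {α β : Type*} [Fintype α] [Fintype β]
    {G : SimpleGraph α} [DecidableRel G.Adj] {H : SimpleGraph β} (h : HasCopy G H) {x : β}
    (hx : ∀ y, y ≠ x → H.Adj x y) : ∃ v, Fintype.card β - 1 ≤ G.degree v := by
  classical
  obtain ⟨f, hf⟩ := h
  refine ⟨f x, ?_⟩
  rw [← card_univ, ← card_erase_of_mem (mem_univ x), ← card_neighborFinset_eq_degree]
  exact card_le_card_of_injOn f (fun y hy => by
    simpa using f.map_adj (hx y (ne_of_mem_erase hy))) hf.injOn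

lemma hasCopy_starGraph_iff {α : Type*} [Fintype α] {G : SimpleGraph α} [DecidableRel G.Adj]
    {n : ℕ} : HasCopy G (_root_.starGraph n) ↔ ∃ v, n ≤ G.degree v := by
  constructor
  · intro h
    simpa using h.exists_card_sub_one_le_degree (x := Sum.inl ()) (by
      rintro (_ | _) h <;> simp_all [_root_.starGraph])
  · rintro ⟨v, hv⟩
    obtain ⟨S, hSv, hS⟩ := exists_subset_card_eq hv
    have hadj : ∀ x ∈ S, G.Adj v x := fun x hx => (mem_neighborFinset _ _ _).1 (hSv hx)
    let e : Fin n ≃ S := (S.equivFin.trans (finCongr hS)).symm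
    refine ⟨⟨Sum.elim (fun _ => v) (fun i => e i), ?_⟩, ?_⟩
    · rintro (_ | a) (_ | b) hab
      · simp [_root_.starGraph] at hab
      · exact hadj _ (e b).2
      · exact (hadj _ (e a).2).symm
      · simp [_root_.starGraph] at hab
    · rintro (_ | a) (_ | b) hab
      · rfl
      · exact absurd hab (G.ne_of_adj (hadj _ (e b).2))
      · exact absurd hab.symm (G.ne_of_adj (hadj _ (e a).2))
      · simpa using e.injective (Subtype.ext hab)

lemma hasCopy_wheelGraph_of_isCycleTuple {α : Type*} {G : SimpleGraph α} {k : ℕ}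
    {c : Fin (k + 1) → α} (hc : G.IsCycleTuple c) {v : α} (hv : ∀ i, G.Adj v (c i)) :
    HasCopy G (wheelGraph (k + 1)) := by
  refine ⟨⟨fun x => x.elim v c, ?_⟩, ?_⟩
  · rintro (_ | a) (_ | b) hab
    · exact hab.elim
    · exact hv b
    · exact (hv a).symm
    · change (cycleGraph (k + 1)).Adj a b at hab
      rw [cycleGraph_eq_circulantGraph, circulantGraph_adj] at hab
      rcases hab.2 with h | h <;> rw [Set.mem_singleton_iff, sub_eq_iff_eq_add'] at h <;> subst h
      · exact (hc.2 b).symm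
      · exact hc.2 a
  · rintro (_ | a) (_ | b) hab
    · rfl
    · exact absurd hab (G.ne_of_adj (hv b))
    · exact absurd hab.symm (G.ne_of_adj (hv a))
    · exact congrArg some (hc.1 hab)

theorem hasCopy_wheelGraph_of_le_degree {α : Type*} [Fintype α] {G : SimpleGraph α}
    [DecidableRel G.Adj] {m : ℕ} {v : α} (hv : m ≤ G.degree v)
    (hdeg : ∀ u, m + 2 * (Fintype.card α - m) ≤ 2 * G.degree u) :
    HasCopy G (wheelGraph m) := by
  classical
  obtain ⟨N, rfl⟩ : ∃ N, m = N + 1 := Nat.exists_eq_succ_of_ne_zero (by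
    have := hdeg v
    have := G.degree_lt_card_verts v
    omega)
  obtain ⟨S, hSv, hS⟩ := exists_subset_card_eq hv
  have hScard : Fintype.card (S : Set α) = N + 1 := by simpa using hS
  have hSdeg (u : (S : Set α)) :
      Fintype.card (S : Set α) ≤ 2 * (G.induce (S : Set α)).degree u := by
    have hind := G.degree_le_degree_induce_add S u
    rw [card_compl, hS] at hind
    have := hdeg u
    omega
  obtain ⟨c, hc⟩ := exists_isCycleTuple_of_card_le_two_mul_degree hScard hSdeg
  exact hasCopy_wheelGraph_of_isCycleTuple (hc.map (Embedding.induce _)) fun i =>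
    (mem_neighborFinset _ _ _).1 (hSv (c i).2)

lemma hasCopy_compl_wheelGraph {α : Type*} [Fintype α] {G : SimpleGraph α} [DecidableRel G.Adj]
    {n m : ℕ} (hnm : 2 * n ≤ m) (hcard : Fintype.card α ≤ n + m)
    (hdeg : ∀ u, G.degree u < n)
    {v : α} (hv : G.degree v + m < Fintype.card α) : HasCopy Gᶜ (wheelGraph m) := by
  classical
  refine hasCopy_wheelGraph_of_le_degree (v := v) ?_ fun u => ?_ <;> rw [degree_compl]
  · omega
  · have := hdeg u
    omega

lemma IsRamsey.mono {α β : Type*} {G₁ : SimpleGraph α} {G₂ : SimpleGraph β} {r s : ℕ}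
    (h : IsRamsey G₁ G₂ r) (hrs : r ≤ s) : IsRamsey G₁ G₂ s := by
  intro H
  let e := Fin.castLEEmb hrs
  rcases h (H.comap e) with h | h
  · exact .inl (h.of_injective_hom ⟨e, id⟩ e.injective)
  · refine .inr
      (h.of_injective_hom ⟨e, fun {a b} (hab : (H.comap e)ᶜ.Adj a b) => ?_⟩ e.injective)
    exact ⟨e.injective.ne hab.1, hab.2⟩

lemma ramseyNumber_eq_succ {α β : Type*} {G₁ : SimpleGraph α} {G₂ : SimpleGraph β} {r : ℕ}
    (h : IsRamsey G₁ G₂ (r + 1)) (h' : ¬ IsRamsey G₁ G₂ r) :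
    ramseyNumber G₁ G₂ = r + 1 :=
  le_antisymm (Nat.sInf_le h) (le_csInf ⟨_, h⟩ fun s hs => by
    by_contra! hlt
    exact h' (hs.mono (by omega)))

theorem isRamsey_starGraph_wheelGraph {n m : ℕ} (hn : 0 < n) (hnm : 2 * n ≤ m) :
    IsRamsey (_root_.starGraph n) (wheelGraph m) (n + m) := by
  classical
  intro G
  rw [or_iff_not_imp_left, hasCopy_starGraph_iff]
  simp only [not_exists, not_le]
  intro hdeg
  have := hdeg ⟨0, by omega⟩
  exact hasCopy_compl_wheelGraph hnm (by simp) hdeg (v := ⟨0, by omega⟩)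
    (by simp only [Fintype.card_fin]; omega)

/-- On an odd number of vertices not every degree can be the odd number `n - 1`. -/
theorem isRamsey_starGraph_wheelGraph_of_even {n m : ℕ} (hn : 0 < n) (hnm : 2 * n ≤ m)
    (hn₂ : Even n) (hm₂ : Even m) :
    IsRamsey (_root_.starGraph n) (wheelGraph m) (n + m - 1) := by
  classical
  intro G
  rw [or_iff_not_imp_left, hasCopy_starGraph_iff]
  simp only [not_exists, not_le]
  intro hdeg
  obtain ⟨a, rfl⟩ := hn₂
  obtain ⟨b, rfl⟩ := hm₂
  obtain ⟨v, hv⟩ := G.exists_degree_ne_of_odd_card (d := a + a - 1)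
    (by simpa using ⟨a + b - 1, by omega⟩) ⟨a - 1, by omega⟩
  have := hdeg v
  exact hasCopy_compl_wheelGraph hnm (by simp) hdeg (v := v)
    (by simp only [Fintype.card_fin]; omega)

theorem not_isRamsey_starGraph_wheelGraph {n m N r : ℕ} (hrN : r < N) (heven : Even (r * N))
    (hrn : r < n) (hNm : N ≤ r + m) : ¬ IsRamsey (_root_.starGraph n) (wheelGraph m) N := by
  obtain ⟨G, _, hG⟩ := exists_regular_fin hrN heven
  intro hR
  rcases hR G with h | h
  · obtain ⟨v, hv⟩ := hasCopy_starGraph_iff.1 h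
    have := hG v
    omega
  · obtain ⟨v, hv⟩ := h.exists_card_sub_one_le_degree (x := none) (by
      rintro (_ | i) h
      exacts [(h rfl).elim, trivial])
    rw [degree_compl, hG] at hv
    simp only [Fintype.card_option, Fintype.card_fin, add_tsub_cancel_right] at hv
    omega

/-- Hasmawati's theorem: for `n ≥ 2` and `m ≥ 2n`,
`R(K_{1,n}, W_m) = n + m - 1` if both `n` and `m` are even, and `n + m` otherwise. -/
theorem star_wheel_ramsey_large (n m : ℕ) (hn : 2 ≤ n) (hm : 2 * n ≤ m) :
    ramseyNumber (_root_.starGraph n) (wheelGraph m) =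
      if Even n ∧ Even m then n + m - 1 else n + m := by
  split_ifs with hnm
  · have hN : n + m - 1 = n + m - 2 + 1 := by omega
    obtain ⟨a, ha⟩ := hnm.1
    have heven : Even ((n - 2) * (n + m - 2)) := Nat.even_mul.2 (.inl ⟨a - 1, by omega⟩)
    rw [hN]
    refine ramseyNumber_eq_succ ?_
      (not_isRamsey_starGraph_wheelGraph (by omega) heven (by omega) (by omega))
    rw [← hN]
    exact isRamsey_starGraph_wheelGraph_of_even (by omega) hm hnm.1 hnm.2
  · have hN : n + m = n + m - 1 + 1 := by omega
    have heven : Even ((n - 1) * (n + m - 1)) := by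
      rcases Nat.even_or_odd n with ⟨a, ha⟩ | ⟨a, ha⟩
      · obtain ⟨b, hb⟩ := Nat.not_even_iff_odd.1 fun hm₂ => hnm ⟨⟨a, ha⟩, hm₂⟩
        exact Nat.even_mul.2 (.inr ⟨a + b, by omega⟩)
      · exact Nat.even_mul.2 (.inl ⟨a, by omega⟩)
    rw [hN]
    refine ramseyNumber_eq_succ ?_
      (not_isRamsey_starGraph_wheelGraph (by omega) heven (by omega) (by omega))
    rw [← hN]
    exact isRamsey_starGraph_wheelGraph (by omega) hm
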